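/- Let f : G → G be an improved relative train track map. If ρ = ρ1 ⊙ ρ2 is a hard splitting and, for some k ≥ 0, σ1 is a terminal subpath of f^k_#(ρ1) and σ2 is an initial subpath of f^k_#(ρ2), then the concatenation σ1σ2 = σ1 ⊙ σ2 is a hard splitting. -/

import Mathlib

/-!
A formal model of (improved) relative train track maps, following
Bestvina–Handel ("Train tracks and automorphisms of free groups") and
Bestvina–Feighn–Handel ("The Tits alternative for Out(Fₙ) I", Thm 5.1.5),
as used in Bridson–Groves, "Free-group automorphisms, train tracks and the
beaded decomposition".

A graph self-map is recorded via its action on oriented edges; edge paths are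
modelled as lists of oriented edges (`bar` is orientation reversal), and the
tightening operator (free reduction of edge paths) is part of the data,
axiomatised by its characteristic properties.
-/

namespace Beaded

inductive StratumKind : Type
  | zero
  | parabolic
  | exponential
  deriving DecidableEq

/-- A self-map of a finite graph together with the tightening operator. -/
structure GraphSelfMap where
  /-- the set of oriented edges -/
  Edge : Type
  fintypeEdge : Fintype Edge
  /-- orientation reversal -/
  bar : Edge → Edge
  bar_bar : ∀ e, bar (bar e) = e
  bar_ne : ∀ e, bar e ≠ e
  /-- the image of an oriented edge: a nontrivial tight edge path -/
  fEdge : Edge → List Edge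
  fEdge_bar : ∀ e, fEdge (bar e) = ((fEdge e).map bar).reverse
  fEdge_ne : ∀ e, fEdge e ≠ []
  fEdge_tight : ∀ e l₁ l₂ e', fEdge e ≠ l₁ ++ e' :: bar e' :: l₂
  /-- tightening (free reduction) of edge paths -/
  tighten : List Edge → List Edge
  tighten_step : ∀ l₁ l₂ e, tighten (l₁ ++ e :: bar e :: l₂) = tighten (l₁ ++ l₂)
  tighten_reduced : ∀ l l₁ l₂ e, tighten l ≠ l₁ ++ e :: bar e :: l₂
  tighten_eq_self : ∀ l, (∀ l₁ l₂ e, l ≠ l₁ ++ e :: bar e :: l₂) → tighten l = l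

namespace GraphSelfMap

variable (G : GraphSelfMap)

/-- edge paths in `G` -/
abbrev Path := List G.Edge

/-- the reverse of an edge path -/
def revPath (ρ : G.Path) : G.Path := (ρ.map G.bar).reverse

/-- a tight (immersed) edge path -/
def Tight (ρ : G.Path) : Prop := ∀ l₁ l₂ e, ρ ≠ l₁ ++ e :: G.bar e :: l₂

/-- the `m`-th power `τ^m` of a path -/
def pathPow (τ : G.Path) (m : ℕ) : G.Path := (List.replicate m τ).flatten

/-- the (unreduced) image `f(ρ)` of an edge path -/
def fWord (ρ : G.Path) : G.Path := ρ.flatMap G.fEdge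

/-- the (unreduced) iterated image `f^k(ρ)` -/
def fIter : ℕ → G.Path → G.Path
  | 0, ρ => ρ
  | k + 1, ρ => G.fWord (fIter k ρ)

/-- `f_#(ρ)`, the tightened image of a path -/
def fSharp (ρ : G.Path) : G.Path := G.tighten (G.fWord ρ)

/-- `f^k_#(ρ)`, the tightened `k`-th iterated image of a path -/
def fSharpIter (k : ℕ) (ρ : G.Path) : G.Path := G.tighten (G.fIter k ρ)

/-- one step of free reduction -/
def Red (x y : G.Path) : Prop :=
  ∃ l₁ l₂ e, x = l₁ ++ e :: G.bar e :: l₂ ∧ y = l₁ ++ l₂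

/-- iterated free reduction (a "choice of tightening") -/
def Reduces : G.Path → G.Path → Prop := Relation.ReflTransGen G.Red

/-- Some choice of tightening of the concatenation `a ++ b` involves a
cancellation between (a residue of) `a` and (a residue of) `b`. -/
def CrossCancellation (a b : G.Path) : Prop :=
  ∃ a' b', G.Reduces a a' ∧ G.Reduces b b' ∧
    ∃ e a₀ b₀, a' = a₀ ++ [e] ∧ b' = G.bar e :: b₀

/-- `σ₁ ⊙ σ₂` is a hard splitting: for every `k ≥ 1` and every choice of
tightening of `f^k(σ₁)f^k(σ₂)` there is no cancellation between the image of
`σ₁` and the image of `σ₂`. -/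
def HardSplitting (σ₁ σ₂ : G.Path) : Prop :=
  G.Tight (σ₁ ++ σ₂) ∧
    ∀ k, 1 ≤ k → ¬ G.CrossCancellation (G.fIter k σ₁) (G.fIter k σ₂)

/-- a hard splitting of `ρ` into the (ordered) list of pieces `ps` -/
def HardSplittingList (ρ : G.Path) (ps : List G.Path) : Prop :=
  ρ = ps.flatten ∧
    ∀ i : ℕ, G.HardSplitting ((ps.take i).flatten) ((ps.drop i).flatten)

/-- an (ordinary) splitting `σ₁ · σ₂` -/
def Splitting (σ₁ σ₂ : G.Path) : Prop :=
  G.Tight (σ₁ ++ σ₂) ∧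
    ∀ k : ℕ, G.fSharpIter k (σ₁ ++ σ₂) = G.fSharpIter k σ₁ ++ G.fSharpIter k σ₂

/-- a Nielsen path: a nontrivial (tight) path with `f_#(σ) = σ` -/
def NielsenPath (ρ : G.Path) : Prop := ρ ≠ [] ∧ G.Tight ρ ∧ G.fSharp ρ = ρ

/-- an indivisible Nielsen path: a Nielsen edge path that is not a
concatenation of two nontrivial Nielsen edge paths -/
def IndivNielsen (ρ : G.Path) : Prop :=
  G.NielsenPath ρ ∧
    ¬ ∃ ρ₁ ρ₂, ρ₁ ≠ [] ∧ ρ₂ ≠ [] ∧ ρ = ρ₁ ++ ρ₂ ∧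
        G.NielsenPath ρ₁ ∧ G.NielsenPath ρ₂

/-- `r`-monochromatic paths: edges are `r`-monochromatic, and sub edge-paths
of `f^r_#(ρ)` are `r`-monochromatic whenever `ρ` is -/
inductive RMono (r : ℕ) : G.Path → Prop
  | edge (e : G.Edge) : RMono r [e]
  | sub (ρ σ : G.Path) : RMono r ρ → σ <:+: G.fSharpIter r ρ → RMono r σ

/-- `σ` is a `k`-step nibbled future of `ρ`, with respect to the path map `g` -/
inductive NibbledFutureWith (g : G.Path → G.Path) : ℕ → G.Path → G.Path → Prop
  | zero (ρ : G.Path) : NibbledFutureWith g 0 ρ ρ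
  | step (k : ℕ) (ρ σ σ' : G.Path) :
      NibbledFutureWith g k ρ σ → σ' <:+: g σ → NibbledFutureWith g (k + 1) ρ σ'

/-- `σ` is a `k`-step nibbled future of `ρ` -/
def NibbledFuture (k : ℕ) (ρ σ : G.Path) : Prop :=
  G.NibbledFutureWith G.fSharp k ρ σ

/-- `σ` is a nibbled future of `ρ` -/
def IsNibbledFuture (ρ σ : G.Path) : Prop := ∃ k, G.NibbledFuture k ρ σ

/-- a `(J,f)`-atom: a `1`-monochromatic edge path of length at most `J`
admitting no non-vacuous hard splitting into edge paths -/
def Atom (J : ℕ) (π : G.Path) : Prop :=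
  G.RMono 1 π ∧ π.length ≤ J ∧ π ≠ [] ∧
    ∀ σ₁ σ₂, π = σ₁ ++ σ₂ → σ₁ ≠ [] → σ₂ ≠ [] → ¬ G.HardSplitting σ₁ σ₂

/-- the splitting `ps` refines the splitting `qs`: the pieces of `qs` are
obtained by grouping together consecutive pieces of `ps` -/
def RefinesList (ps qs : List G.Path) : Prop :=
  ∃ css : List (List G.Path), css.flatten = ps ∧ css.map List.flatten = qs

/-- the subpath of `χ` starting at position `i` and of length `l` is
displayed: there is a hard splitting of `χ` immediately on either side -/
def DisplayedAt (χ : G.Path) (i l : ℕ) : Prop :=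
  0 < l ∧ i + l ≤ χ.length ∧
    G.HardSplitting (χ.take i) (χ.drop i) ∧
    G.HardSplitting (χ.take (i + l)) (χ.drop (i + l))

/-- the maximum length of `f^k_#(E)` over all edges `E` -/
noncomputable def maxImageLength (k : ℕ) : ℕ :=
  haveI := G.fintypeEdge
  Finset.univ.sup fun e : G.Edge => (G.fSharpIter k [e]).length

/-! labelled tightening, used to trace the pasts of edges under an arbitrary
choice of tightening -/

/-- the image of a labelled edge path, labels being inherited -/
def lFWord (w : List (ℕ × G.Edge)) : List (ℕ × G.Edge) :=
  w.flatMap fun p => (G.fEdge p.2).map fun e => (p.1, e)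

/-- one step of free reduction of labelled paths -/
def LRed (x y : List (ℕ × G.Edge)) : Prop :=
  ∃ w₁ w₂ s t e, x = w₁ ++ (s, e) :: (t, G.bar e) :: w₂ ∧ y = w₁ ++ w₂

def LReduces : List (ℕ × G.Edge) → List (ℕ × G.Edge) → Prop :=
  Relation.ReflTransGen G.LRed

/-- `v` is obtained from the labelled path `w` by `i` applications of `f`,
tightening completely (with an arbitrary choice of tightening) at each step;
the label of each edge of `v` records the position of its past in `w`. -/
inductive LabelledIter : ℕ → List (ℕ × G.Edge) → List (ℕ × G.Edge) → Prop
  | zero (w : List (ℕ × G.Edge)) : LabelledIter 0 w w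
  | step (i : ℕ) (w v u : List (ℕ × G.Edge)) :
      LabelledIter i w v → G.LReduces (G.lFWord v) u →
      G.Tight (u.map Prod.snd) → LabelledIter (i + 1) w u

end GraphSelfMap

/-- a graph self-map together with a filtration by `f`-invariant subgraphs,
recorded via the weight (= stratum index) of each edge, and the type of each
stratum -/
structure PreRTT extends GraphSelfMap where
  /-- the number of strata (`ω` in the paper) -/
  numStrata : ℕ
  /-- the weight (stratum index) of each edge, an element of `{1, …, ω}` -/
  weight : Edge → ℕ
  weight_pos : ∀ e, 1 ≤ weight e
  weight_le : ∀ e, weight e ≤ numStrata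
  weight_bar : ∀ e, weight (bar e) = weight e
  /-- the filtration is `f`-invariant -/
  weight_fEdge : ∀ e e', e' ∈ fEdge e → weight e' ≤ weight e
  /-- the type (zero / parabolic / exponential) of each stratum -/
  kind : ℕ → StratumKind

namespace PreRTT

variable (G : PreRTT)

/-- the weight of a path: the highest stratum it meets -/
def pathWeight (ρ : G.Path) : ℕ := (ρ.map G.weight).foldr max 0

/-- the derivative map `Df`: an oriented edge is sent to the first oriented
edge of its image -/
def Df (e : G.Edge) : G.Edge := (G.fEdge e).headD e

/-- the turn `{e₁, e₂}` (an unordered pair of oriented edges at a common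
vertex) is illegal: some iterate of `Df` makes it degenerate -/
def IllegalTurn (e₁ e₂ : G.Edge) : Prop := ∃ k : ℕ, G.Df^[k] e₁ = G.Df^[k] e₂

/-- a path is `r`-legal if it contains no illegal turn in `H_r` -/
def RLegal (r : ℕ) (ρ : G.Path) : Prop :=
  ∀ l₁ l₂ e₁ e₂, ρ = l₁ ++ e₁ :: e₂ :: l₂ →
    G.weight e₁ = r → G.weight e₂ = r → ¬ G.IllegalTurn (G.bar e₁) e₂

open Classical in
/-- the number of illegal turns in `H_r` occurring in a path -/
noncomputable def numIllegalTurns (r : ℕ) (ρ : G.Path) : ℕ :=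
  ((Finset.range ρ.length).filter fun i =>
    ∃ l₁ l₂ e₁ e₂, l₁.length = i ∧ ρ = l₁ ++ e₁ :: e₂ :: l₂ ∧
      G.weight e₁ = r ∧ G.weight e₂ = r ∧ G.IllegalTurn (G.bar e₁) e₂).card

/-- the set `P_r` of Bestvina–Feighn–Handel (Section 4.2) -/
def Pset (r : ℕ) : Set G.Path :=
  { ρ | G.Tight ρ ∧ G.pathWeight ρ ≤ r ∧
      (∀ k, 1 ≤ k → G.numIllegalTurns r (G.fSharpIter k ρ) = 1) ∧
      (∀ k, 1 ≤ k →
        (∀ e, (G.fSharpIter k ρ).head? = some e → G.weight e = r) ∧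
        (∀ e, (G.fSharpIter k ρ).getLast? = some e → G.weight e = r)) ∧
      ∃ B, ∀ k, ((G.fSharpIter k ρ).countP fun e => G.weight e == r) ≤ B }

/-- an edge of a parabolic stratum -/
def ParabolicEdge (e : G.Edge) : Prop := G.kind (G.weight e) = StratumKind.parabolic

/-- an edge of an exponential stratum -/
def ExponentialEdge (e : G.Edge) : Prop := G.kind (G.weight e) = StratumKind.exponential

/-- a linear edge: a parabolic edge with `f(E) = E ⊙ τ^m`, `τ` a Nielsen path -/
def LinearEdge (e : G.Edge) : Prop :=
  G.ParabolicEdge e ∧ ∃ τ m, G.NielsenPath τ ∧ 1 ≤ m ∧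
    G.fEdge e = e :: G.pathPow τ m ∧ G.HardSplitting [e] (G.pathPow τ m)

/-- `ρ` has the standard form `E_i τ̄^k Ē_j` of a growing exceptional path,
where `τ` is a Nielsen path, `k ≥ 1`, `E_i, E_j` are parabolic edges with
`f(E_i) = E_i ⊙ τ^m`, `f(E_j) = E_j ⊙ τ^n` and `n > m > 0`. -/
def IsGEPForm (ρ : G.Path) : Prop :=
  ∃ (Ei Ej : G.Edge) (τ : G.Path) (k m n : ℕ),
    G.NielsenPath τ ∧ 1 ≤ k ∧ 0 < m ∧ m < n ∧
    G.ParabolicEdge Ei ∧ G.ParabolicEdge Ej ∧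
    G.fEdge Ei = Ei :: G.pathPow τ m ∧ G.HardSplitting [Ei] (G.pathPow τ m) ∧
    G.fEdge Ej = Ej :: G.pathPow τ n ∧ G.HardSplitting [Ej] (G.pathPow τ n) ∧
    ρ = Ei :: (G.pathPow (G.revPath τ) k ++ [G.bar Ej])

/-- a growing exceptional path (GEP) -/
def GEP (ρ : G.Path) : Prop := G.IsGEPForm ρ ∨ G.IsGEPForm (G.revPath ρ)

/-- a pseudo-exceptional path (ΨEP): a proper initial sub edge-path of a path
in GEP form (resp. a proper terminal sub edge-path, when it is the reverse
that is in GEP form) -/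
def PsiEP (π : G.Path) : Prop :=
  ∃ ρ : G.Path, π ≠ [] ∧ π.length < ρ.length ∧
    ((G.IsGEPForm ρ ∧ π <+: ρ) ∨ (G.IsGEPForm (G.revPath ρ) ∧ π <:+ ρ))

/-- a bead: a GEP, a ΨEP, a `(J,f)`-atom, or an indivisible Nielsen path of
length at most `J` -/
def Bead (J : ℕ) (π : G.Path) : Prop :=
  G.GEP π ∨ G.PsiEP π ∨ G.Atom J π ∨ (G.IndivNielsen π ∧ π.length ≤ J)

/-- a `(J,f)`-beaded path: one admitting a hard splitting into beads -/
def Beaded (J : ℕ) (ρ : G.Path) : Prop :=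
  ∃ ps : List G.Path, G.HardSplittingList ρ ps ∧ ∀ π ∈ ps, G.Bead J π

/-- a basic path of height `i` (where `E_i` is the unique edge of the
parabolic stratum `H_i`): `E_iγĒ_i`, `E_iγ` or `γĒ_i` with `γ` in `G_{i-1}` -/
def BasicPath (i : ℕ) (Ei : G.Edge) (π : G.Path) : Prop :=
  ∃ γ : G.Path, G.pathWeight γ < i ∧
    (π = Ei :: (γ ++ [G.bar Ei]) ∨ π = Ei :: γ ∨ π = γ ++ [G.bar Ei])

/-- the conclusion of the First Decomposition Theorem for edge paths of length
at most `n`, with constant `V`: every nibbled future of such a path admits a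
hard splitting into edge paths, each of which is either a nibbled future of a
GEP or has length at most `V` -/
def FirstDecompProp (n V : ℕ) : Prop :=
  ∀ ρ : G.Path, G.Tight ρ → ρ.length ≤ n →
    ∀ (k : ℕ) (σ : G.Path), G.NibbledFuture k ρ σ →
      ∃ ps, G.HardSplittingList σ ps ∧
        ∀ π ∈ ps, (∃ g, G.GEP g ∧ G.IsNibbledFuture g π) ∨ π.length ≤ V

/-- an `r`-seed: a nonempty subpath of `f(E)`, `E` an edge of `H_r`, maximal
subject to lying in `G_{r-1}` -/
def SeedOcc (E : G.Edge) (σ₁ ρ σ₂ : G.Path) : Prop :=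
  ρ ≠ [] ∧ G.pathWeight ρ < G.weight E ∧ G.fEdge E = σ₁ ++ ρ ++ σ₂ ∧
    (∀ e, σ₁.getLast? = some e → G.weight E ≤ G.weight e) ∧
    (∀ e, σ₂.head? = some e → G.weight E ≤ G.weight e)

end PreRTT

/-- a relative train track map (Bestvina–Handel, Section 5) -/
structure RTT extends PreRTT where
  /-- (RTT-i) `Df` maps the oriented edges of an exponential stratum to
  oriented edges of the same stratum -/
  rtt_i : ∀ e, toPreRTT.ExponentialEdge e → weight (toPreRTT.Df e) = weight e
  /-- (RTT-iii) the image of an `r`-legal path lying in an exponential stratum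
  `H_r` contains no illegal turns in `H_r` -/
  rtt_iii : ∀ r, kind r = StratumKind.exponential →
    ∀ ρ : List Edge, (∀ e ∈ ρ, weight e = r) → toPreRTT.RLegal r ρ →
      toPreRTT.RLegal r (toGraphSelfMap.fWord ρ)

/-- an improved relative train track map
(Bestvina–Feighn–Handel, Theorem 5.1.5) -/
structure IRTT extends RTT where
  /-- every periodic Nielsen path has period one -/
  nielsen_period_one : ∀ ρ : List Edge, toGraphSelfMap.Tight ρ → ρ ≠ [] →
    ∀ k, 1 ≤ k → toGraphSelfMap.fSharpIter k ρ = ρ → toGraphSelfMap.fSharp ρ = ρ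
  /-- the image of an edge of a zero stratum lies lower in the filtration -/
  zero_strata : ∀ e, kind (weight e) = StratumKind.zero →
    toPreRTT.pathWeight (fEdge e) < weight e
  /-- (ne-i), (ne-ii): each parabolic stratum is a single edge `E` with
  `f(E) = E ⊙ u` for a path `u` lower in the filtration -/
  parabolic_strata : ∀ i, 1 ≤ i → i ≤ numStrata → kind i = StratumKind.parabolic →
    ∃ E, weight E = i ∧ (∀ e', weight e' = i → e' = E ∨ e' = bar E) ∧
      ∃ u, fEdge E = E :: u ∧ toPreRTT.pathWeight u < i ∧
        toGraphSelfMap.HardSplitting [E] u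
  /-- (eg-i) each exponential stratum carries at most one indivisible Nielsen
  path, up to orientation -/
  eg_unique : ∀ r, kind r = StratumKind.exponential →
    ∀ ρ ρ', toGraphSelfMap.IndivNielsen ρ → toGraphSelfMap.IndivNielsen ρ' →
      toPreRTT.pathWeight ρ = r → toPreRTT.pathWeight ρ' = r →
      ρ' = ρ ∨ ρ' = toGraphSelfMap.revPath ρ

/-- The conclusion of Lemma `Power1` for the iterate `f₁ = f^{k₁}_#`. -/
def Power1Prop (G : IRTT) (k₁ : ℕ) : Prop :=
  -- (A) exponential-weight indivisible Nielsen paths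
  (∀ (r : ℕ) (E : G.Edge) (σ : G.Path),
      G.kind r = StratumKind.exponential → G.weight E = r →
      G.IndivNielsen σ → G.pathWeight σ = r →
      (σ.length < (G.fSharpIter k₁ [E]).length ∧
       (∀ σ₀, σ₀ <:+: σ → σ₀ ≠ [] → σ₀.length < σ.length →
          G.RLegal r (G.fSharpIter k₁ σ₀)) ∧
       (∀ σ₀ E', σ₀ <+: σ → σ₀ ≠ [] → σ₀.length < σ.length → σ.head? = some E' →
          ∃ ξ, G.fSharpIter k₁ σ₀ = G.fEdge E' ++ ξ ∧
            G.HardSplitting (G.fEdge E') ξ) ∧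
       (∀ σ₁ E'', σ₁ <:+ σ → σ₁ ≠ [] → σ₁.length < σ.length →
          σ.getLast? = some E'' →
          ∃ ξ', G.fSharpIter k₁ σ₁ = ξ' ++ G.fEdge E'' ∧
            G.HardSplitting ξ' (G.fEdge E'')))) ∧
  -- (B) parabolic-weight indivisible Nielsen paths inside images of linear edges
  (∀ (σ : G.Path) (E E' : G.Edge) (η : G.Path) (m : ℕ),
      G.kind (G.pathWeight σ) = StratumKind.parabolic → G.IndivNielsen σ →
      (∃ E₁, G.LinearEdge E₁ ∧ σ <:+: G.fEdge E₁) →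
      G.LinearEdge E → G.LinearEdge E' → G.NielsenPath η →
      (σ = E :: (G.pathPow η m ++ [G.bar E']) ∨
       σ = E :: (G.pathPow (G.revPath η) m ++ [G.bar E'])) →
      ((∀ σ₀, σ₀ <+: σ → σ₀ ≠ [] → σ₀.length < σ.length →
          ∃ j ξ'', m < j ∧
            G.HardSplittingList (G.fSharpIter k₁ σ₀)
              ([E] :: List.replicate j η ++ [ξ''])) ∧
       (∀ σ₁, σ₁ <:+ σ → σ₁ ≠ [] → σ₁.length < σ.length →
          ∃ j ξ', m < j ∧
            G.HardSplittingList (G.fSharpIter k₁ σ₁)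
              (ξ' :: List.replicate j (G.revPath η) ++ [[G.bar E']]))))

/-- `f : G → G` represents the automorphism `ψ` of the free group: a marking
of the edges by elements of the free group, compatible with orientation
reversal, generating the free group (π₁-surjectivity of the marking), and
intertwining `f` with `ψ`. -/
structure RepresentsData (n : ℕ) (G : GraphSelfMap)
    (ψ : MulAut (FreeGroup (Fin n))) where
  edgeMark : G.Edge → FreeGroup (Fin n)
  edgeMark_bar : ∀ e, edgeMark (G.bar e) = (edgeMark e)⁻¹
  generates : Subgroup.closure (Set.range edgeMark) = ⊤
  induces : ∀ e, ((G.fEdge e).map edgeMark).prod = ψ (edgeMark e)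

/-!
A cancellation between `f^m(σ₁)` and `f^m(σ₂)` is a cancellation between `f^{k+m}(ρ₁)` and
`f^{k+m}(ρ₂)`: tightening `f^k(ρᵢ)` to `f^k_#(ρᵢ)` first, `f^{k+m}(ρᵢ)` reduces to
`f^m(f^k_#(ρᵢ))`, in which `f^m(σ₁)` and `f^m(σ₂)` sit on either side of the junction.
Tightness of `σ₁σ₂` holds because it is a subpath of `f^k_#(ρ₁) f^k_#(ρ₂)`, which is tight
since `f^k_#(ρᵢ)` is itself one choice of tightening of `f^k(ρᵢ)`.
-/

namespace GraphSelfMap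

variable {G : GraphSelfMap}

lemma tight_tighten (l : G.Path) : G.Tight (G.tighten l) :=
  G.tighten_reduced l

lemma Tight.infix {l m : G.Path} (h : G.Tight l) (hm : m <:+: l) : G.Tight m := by
  obtain ⟨s, t, rfl⟩ := hm
  intro l₁ l₂ e heq
  exact h (s ++ l₁) (l₂ ++ t) e (by simp [heq])

lemma reduces_tighten (l : G.Path) : G.Reduces l (G.tighten l) := by
  induction hn : l.length using Nat.strong_induction_on generalizing l with
  | _ n ih =>
    by_cases h : G.Tight l
    · rw [G.tighten_eq_self l h]
      exact .refl
    · obtain ⟨l₁, l₂, e, rfl⟩ : ∃ l₁ l₂ e, l = l₁ ++ e :: G.bar e :: l₂ := by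
        simpa [Tight] using h
      rw [G.tighten_step]
      exact .head ⟨l₁, l₂, e, rfl, rfl⟩ (ih _ (by simp [← hn]) _ rfl)

lemma Reduces.append_left {x y : G.Path} (p : G.Path) (h : G.Reduces x y) :
    G.Reduces (p ++ x) (p ++ y) :=
  Relation.ReflTransGen.lift (p ++ ·) (fun _ _ ⟨l₁, l₂, e, hx, hy⟩ =>
    ⟨p ++ l₁, l₂, e, by simp [hx], by simp [hy]⟩) _ _ h

lemma Reduces.append_right {x y : G.Path} (q : G.Path) (h : G.Reduces x y) :
    G.Reduces (x ++ q) (y ++ q) :=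
  Relation.ReflTransGen.lift (· ++ q) (fun _ _ ⟨l₁, l₂, e, hx, hy⟩ =>
    ⟨l₁, l₂ ++ q, e, by simp [hx], by simp [hy]⟩) _ _ h

lemma reduces_append_revPath_nil (w : G.Path) : G.Reduces (w ++ G.revPath w) [] := by
  induction w with
  | nil => exact .refl
  | cons a w ih =>
    have hcancel : G.Reduces ([a] ++ (w ++ G.revPath w) ++ [G.bar a]) [a, G.bar a] :=
      (ih.append_left [a]).append_right [G.bar a]
    have hsplit : a :: w ++ G.revPath (a :: w) = [a] ++ (w ++ G.revPath w) ++ [G.bar a] := by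
      simp [revPath]
    rw [hsplit]
    exact hcancel.tail ⟨[], [], a, rfl, rfl⟩

lemma fWord_append (a b : G.Path) : G.fWord (a ++ b) = G.fWord a ++ G.fWord b := by
  simp [fWord]

lemma fIter_append (m : ℕ) (a b : G.Path) :
    G.fIter m (a ++ b) = G.fIter m a ++ G.fIter m b := by
  induction m with
  | zero => rfl
  | succ m ih => simp only [fIter, ih, fWord_append]

lemma fIter_add (k m : ℕ) (ρ : G.Path) : G.fIter (k + m) ρ = G.fIter m (G.fIter k ρ) := by
  induction m with
  | zero => rfl
  | succ m ih => exact congrArg G.fWord ih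

/-- `f` sends the backtrack `e ē` to the backtrack `f(e) f(e)‾`, which reduces away. -/
lemma Reduces.fWord {x y : G.Path} (h : G.Reduces x y) : G.Reduces (G.fWord x) (G.fWord y) :=
  Relation.ReflTransGen.lift' G.fWord (fun x y ⟨l₁, l₂, e, hx, hy⟩ => by
    have hcancel := ((reduces_append_revPath_nil (G.fEdge e)).append_left
      (G.fWord l₁)).append_right (G.fWord l₂)
    show G.Reduces (G.fWord x) (G.fWord y)
    simpa [hx, hy, GraphSelfMap.fWord, G.fEdge_bar, revPath] using hcancel) _ _ h

lemma Reduces.fIter {x y : G.Path} (m : ℕ) (h : G.Reduces x y) :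
    G.Reduces (G.fIter m x) (G.fIter m y) := by
  induction m with
  | zero => exact h
  | succ m ih => exact ih.fWord

lemma reduces_fIter_add (k m : ℕ) (ρ : G.Path) :
    G.Reduces (G.fIter (k + m) ρ) (G.fIter m (G.fSharpIter k ρ)) := by
  rw [fIter_add]
  exact (reduces_tighten _).fIter m

lemma CrossCancellation.of_reduces {a b a' b' : G.Path} (ha : G.Reduces a a')
    (hb : G.Reduces b b') (h : G.CrossCancellation a' b') : G.CrossCancellation a b :=
  let ⟨a'', b'', ha', hb', hcancel⟩ := h
  ⟨a'', b'', ha.trans ha', hb.trans hb', hcancel⟩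

lemma CrossCancellation.append {a b : G.Path} (p q : G.Path) (h : G.CrossCancellation a b) :
    G.CrossCancellation (p ++ a) (b ++ q) := by
  obtain ⟨a', b', ha, hb, e, a₀, b₀, rfl, rfl⟩ := h
  exact ⟨p ++ (a₀ ++ [e]), G.bar e :: b₀ ++ q, ha.append_left p, hb.append_right q,
    e, p ++ a₀, b₀ ++ q, by simp, rfl⟩

lemma Tight.append {a b : G.Path} (ha : G.Tight a) (hb : G.Tight b)
    (hab : ¬ G.CrossCancellation a b) : G.Tight (a ++ b) := by
  intro l₁ l₂ e heq
  rcases List.append_eq_append_iff.mp heq with ⟨a', -, hb'⟩ | ⟨c, ha', hc⟩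
  · exact hb a' l₂ e hb'
  · match c, hc with
    | [], hc => exact hb [] l₂ e (by simpa using hc.symm)
    | [x], hc =>
      obtain ⟨rfl, hb'⟩ : e = x ∧ G.bar e :: l₂ = b := by simpa using hc
      exact hab ⟨a, b, .refl, .refl, e, l₁, l₂, ha', hb'.symm⟩
    | x :: y :: c, hc =>
      obtain ⟨rfl, rfl, -⟩ : e = x ∧ G.bar e = y ∧ l₂ = c ++ b := by simpa using hc
      exact ha l₁ c e ha'

lemma HardSplitting.tight_fSharpIter_append {ρ₁ ρ₂ : G.Path} (h : G.HardSplitting ρ₁ ρ₂)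
    (k : ℕ) : G.Tight (G.fSharpIter k ρ₁ ++ G.fSharpIter k ρ₂) := by
  rcases Nat.eq_zero_or_pos k with rfl | hk
  · have hρ₁ : G.Tight ρ₁ := h.1.infix (List.prefix_append ρ₁ ρ₂).isInfix
    have hρ₂ : G.Tight ρ₂ := h.1.infix (List.suffix_append ρ₁ ρ₂).isInfix
    simpa [fSharpIter, fIter, G.tighten_eq_self ρ₁ hρ₁, G.tighten_eq_self ρ₂ hρ₂] using h.1
  · exact (tight_tighten _).append (tight_tighten _) fun hc =>
      h.2 k hk (hc.of_reduces (reduces_tighten _) (reduces_tighten _))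

end GraphSelfMap

open GraphSelfMap in
/-- Let `f : G → G` be an improved relative train track map.  If
`ρ = ρ₁ ⊙ ρ₂` is a hard splitting and, for some `k ≥ 0`, `σ₁` is a terminal
subpath of `f^k_#(ρ₁)` and `σ₂` is an initial subpath of `f^k_#(ρ₂)`, then the
concatenation `σ₁σ₂ = σ₁ ⊙ σ₂` is a hard splitting. -/
theorem hard_splitting_of_futures (G : IRTT) (ρ₁ ρ₂ : G.Path) (k : ℕ)
    (σ₁ σ₂ : G.Path) (h : G.HardSplitting ρ₁ ρ₂)
    (h₁ : σ₁ <:+ G.fSharpIter k ρ₁) (h₂ : σ₂ <+: G.fSharpIter k ρ₂) :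
    G.HardSplitting σ₁ σ₂ := by
  obtain ⟨π₁, hπ₁⟩ := h₁
  obtain ⟨π₂, hπ₂⟩ := h₂
  have hσ : σ₁ ++ σ₂ <:+: G.fSharpIter k ρ₁ ++ G.fSharpIter k ρ₂ :=
    ⟨π₁, π₂, by simp [← hπ₁, ← hπ₂]⟩
  refine ⟨(h.tight_fSharpIter_append k).infix hσ, fun m hm hc => h.2 (k + m) (by omega) ?_⟩
  have hr₁ := reduces_fIter_add k m ρ₁
  have hr₂ := reduces_fIter_add k m ρ₂
  rw [← hπ₁, fIter_append] at hr₁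
  rw [← hπ₂, fIter_append] at hr₂
  exact (hc.append _ _).of_reduces hr₁ hr₂

end Beaded
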